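/- Let A be a DFA with n states recognizing L, let w ∈ S(L), and suppose w admits a factorization w = u₁v₁^{i₁}⋯u_kv_k^{i_k} satisfying the loop property (q₀ · u₁v₁^{i₁}⋯u_j = q₀ · u₁v₁^{i₁}⋯u_jv_j for all j) and such that no v_j is a prefix of the remaining suffix u_{j+1}v_{j+1}^{i_{j+1}}⋯u_kv_k^{i_k}. If a < b are two indices with v_a, v_b nonempty and |v_a| = |v_b|, then a contradiction arises; hence the nonempty lengths |v_j| in such a factorization are pairwise distinct. -/

import Mathlib

/-- Radix (length-lexicographic) order on words over a linearly ordered alphabet. -/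
def RadixLT {α : Type*} [LinearOrder α] (u v : List α) : Prop :=
  u.length < v.length ∨ (u.length = v.length ∧ List.Lex (· < ·) u v)

/-- `SWords L` is the set of length-wise lexicographically smallest words of `L`. -/
def SWords {α : Type*} [LinearOrder α] (L : Set (List α)) : Set (List α) :=
  {u | u ∈ L ∧ ∀ v ∈ L, RadixLT v u → v.length < u.length}

/-- A language is thin if it contains at most one word of each length. -/
def Thin {α : Type*} (L : Set (List α)) : Prop :=
  ∀ n : ℕ, ∀ u ∈ L, ∀ v ∈ L, u.length = n → v.length = n → u = v

/-- `wpow l n` is the `n`-fold concatenation of the word `l`. -/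
def wpow {α : Type*} (l : List α) : ℕ → List α
  | 0 => []
  | n + 1 => l ++ wpow l n


/-!
A factorization with equal-length loops `v_a`, `v_b` (a < b) writes `w = X v_a Y v_b Z`, where
both loops can be pumped independently. Pumping `v_a` up and `v_b` down, or the other way round,
gives the words `X v_a v_a Y Z` and `X Y v_b v_b Z` of `L`, of the same length as `w`. Since `w` is
the lexicographically least word of its length in `L`, neither of `v_a Y`, `Y v_b` can be smaller
than the other, so `v_a Y = Y v_b`. Then the suffix `Y v_b Z` following the `a`-th block starts
with `v_a`, which the factorization forbids.
-/

theorem wpow_succ {α : Type*} (l : List α) (n : ℕ) : wpow l (n + 1) = wpow l n ++ l := by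
  induction n with
  | zero => simp [wpow]
  | succ n ih =>
    show l ++ wpow l (n + 1) = (l ++ wpow l n) ++ l
    rw [ih, List.append_assoc]

theorem DFA.evalFrom_wpow_of_evalFrom_eq {α σ : Type*} {M : DFA α σ} {s : σ} {v : List α}
    (h : M.evalFrom s v = s) (m : ℕ) : M.evalFrom s (wpow v m) = s := by
  induction m with
  | zero => rfl
  | succ m ih => rw [wpow, DFA.evalFrom_of_append, h, ih]

theorem List.Lex.append_of_length_eq {α : Type*} {r : α → α → Prop} {s t : List α}
    (h : List.Lex r s t) (hlen : s.length = t.length) (z₁ z₂ : List α) :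
    List.Lex r (s ++ z₁) (t ++ z₂) := by
  induction h with
  | nil => simp at hlen
  | rel hab => exact List.Lex.rel hab
  | cons _ ih => exact List.Lex.cons (ih (by simpa using hlen))

theorem List.flatMap_range'_eq_append_append {α : Type*} (f : ℕ → List α) {s n b : ℕ}
    (hsb : s ≤ b) (hb : b < s + n) :
    (List.range' s n).flatMap f =
      (List.range' s (b - s)).flatMap f ++ f b ++
        (List.range' (b + 1) (s + n - (b + 1))).flatMap f := by
  obtain ⟨m, rfl⟩ : ∃ m, n = (b - s) + (m + 1) := ⟨s + n - (b + 1), by omega⟩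
  rw [← List.range'_append_1, List.range'_succ, show s + (b - s) = b by omega,
    show s + (b - s + (m + 1)) - (b + 1) = m by omega]
  simp

theorem List.flatMap_range_eq_append_append {α : Type*} (f : ℕ → List α) {b k : ℕ}
    (hb : b < k) :
    (List.range k).flatMap f =
      (List.range b).flatMap f ++ f b ++ (List.range' (b + 1) (k - (b + 1))).flatMap f := by
  simpa [← List.range_eq_range'] using
    List.flatMap_range'_eq_append_append f (Nat.zero_le b) (by omega : b < 0 + k)

theorem SWords.not_lex_of_length_eq {α : Type*} [LinearOrder α] {L : Set (List α)}
    {w x : List α} (hw : w ∈ SWords L) (hx : x ∈ L) (hlen : x.length = w.length) :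
    ¬ List.Lex (· < ·) x w :=
  fun hlex => (hw.2 x hx (Or.inr ⟨hlen, hlex⟩)).ne hlen

theorem SWords.append_eq_append_of_pumped_mem {α : Type*} [LinearOrder α] {L : Set (List α)}
    {X U Y V Z : List α} (hw : X ++ U ++ Y ++ V ++ Z ∈ SWords L)
    (hU : X ++ U ++ U ++ Y ++ Z ∈ L) (hV : X ++ Y ++ V ++ V ++ Z ∈ L)
    (hlen : U.length = V.length) :
    U ++ Y = Y ++ V := by
  have hUY : (U ++ Y).length = (Y ++ V).length := by simp [hlen, Nat.add_comm]
  rcases trichotomous_of (List.Lex (· < ·)) (U ++ Y) (Y ++ V) with h | h | h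
  · refine absurd ?_ (SWords.not_lex_of_length_eq hw hU (by simp [hlen]; omega))
    simpa using (h.append_of_length_eq hUY Z Z).append_left _ (X ++ U)
  · exact h
  · refine absurd ?_ (SWords.not_lex_of_length_eq hw hV (by simp [hlen]; omega))
    simpa using (h.append_of_length_eq hUY.symm (V ++ Z) (V ++ Z)).append_left _ X

theorem DFA.prefix_of_loops_of_mem_SWords {α σ : Type*} [LinearOrder α] (M : DFA α σ)
    {P Q R va vb : List α} {m n : ℕ} (hm : 1 ≤ m) (hn : 1 ≤ n) (hlen : va.length = vb.length)
    (hw : P ++ wpow va m ++ Q ++ wpow vb n ++ R ∈ SWords M.accepts)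
    (ha : M.evalFrom M.start (P ++ va) = M.evalFrom M.start P)
    (hb : M.evalFrom M.start (P ++ wpow va m ++ Q ++ vb) =
      M.evalFrom M.start (P ++ wpow va m ++ Q)) :
    va <+: Q ++ wpow vb n ++ R := by
  obtain ⟨m, rfl⟩ : ∃ m', m = m' + 1 := ⟨m - 1, by omega⟩
  obtain ⟨n, rfl⟩ : ∃ n', n = n' + 1 := ⟨n - 1, by omega⟩
  simp only [DFA.evalFrom_of_append] at ha hb
  rw [DFA.evalFrom_wpow_of_evalFrom_eq ha] at hb
  have hpumped : ∀ m' n', P ++ wpow va m' ++ Q ++ wpow vb n' ++ R ∈ M.accepts := by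
    intro m' n'
    have hstate : _ ∈ M.accepts := hw.1
    simp only [DFA.mem_accepts, DFA.eval, DFA.evalFrom_of_append,
      DFA.evalFrom_wpow_of_evalFrom_eq ha, DFA.evalFrom_wpow_of_evalFrom_eq hb] at hstate ⊢
    exact hstate
  have hcomm : va ++ Q = Q ++ vb := by
    refine SWords.append_eq_append_of_pumped_mem (L := M.accepts) (X := P ++ wpow va m)
      (Z := wpow vb n ++ R) ?_ ?_ ?_ hlen
    · rw [wpow_succ va m] at hw
      simpa only [wpow, List.append_assoc] using hw
    · have h := hpumped (m + 2) n
      simp only [wpow_succ va, List.append_assoc] at h ⊢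
      exact h
    · have h := hpumped m (n + 2)
      simp only [wpow, List.append_assoc] at h ⊢
      exact h
  refine ⟨Q ++ wpow vb n ++ R, ?_⟩
  rw [wpow, ← List.append_assoc Q, ← hcomm]
  simp only [List.append_assoc]

theorem stmt9_general {α σ : Type*} [LinearOrder α] (M : DFA α σ)
    (w : List α) (hw : w ∈ SWords M.accepts)
    (k : ℕ) (u v : ℕ → List α) (i : ℕ → ℕ)
    (hexp : ∀ j < k, 1 ≤ i j)
    (hfact : w = (List.range k).flatMap (fun j => u j ++ wpow (v j) (i j)))
    (hloop : ∀ j < k,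
      M.evalFrom M.start
          ((List.range j).flatMap (fun t => u t ++ wpow (v t) (i t)) ++ u j) =
        M.evalFrom M.start
          ((List.range j).flatMap (fun t => u t ++ wpow (v t) (i t)) ++ u j ++ v j))
    (hpre : ∀ j < k, v j ≠ [] →
      ¬ (v j <+: (List.range' (j + 1) (k - (j + 1))).flatMap
            (fun t => u t ++ wpow (v t) (i t)))) :
    ∀ a b, a < b → b < k → v a ≠ [] → v b ≠ [] →
      (v a).length ≠ (v b).length := by
  intro a b hab hbk hva _ hlen
  have hak : a < k := hab.trans hbk
  set F := fun t => u t ++ wpow (v t) (i t)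
  set mid := (List.range' (a + 1) (b - (a + 1))).flatMap F
  set suffix_b := (List.range' (b + 1) (k - (b + 1))).flatMap F
  have hsuffix_a : (List.range' (a + 1) (k - (a + 1))).flatMap F =
      mid ++ u b ++ wpow (v b) (i b) ++ suffix_b := by
    simpa [F, show a + 1 + (k - (a + 1)) - (b + 1) = k - (b + 1) by omega] using
      List.flatMap_range'_eq_append_append F (by omega : a + 1 ≤ b)
        (by omega : b < a + 1 + (k - (a + 1)))
  have hprefix_b := List.flatMap_range_eq_append_append F hab
  apply hpre a hak hva
  rw [hsuffix_a]
  refine M.prefix_of_loops_of_mem_SWords (P := (List.range a).flatMap F ++ u a)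
    (hexp a hak) (hexp b hbk) hlen ?_ (hloop a hak).symm ?_
  · rw [hfact, List.flatMap_range_eq_append_append F hbk, hprefix_b] at hw
    simpa [F] using hw
  · simpa [hprefix_b, F] using (hloop b hbk).symm

theorem stmt9 {α σ : Type*} [LinearOrder α] [Fintype σ] (M : DFA α σ)
    (w : List α) (hw : w ∈ SWords M.accepts)
    (k : ℕ) (u v : ℕ → List α) (i : ℕ → ℕ)
    (hexp : ∀ j < k, 1 ≤ i j)
    (hfact : w = (List.range k).flatMap (fun j => u j ++ wpow (v j) (i j)))
    (hloop : ∀ j < k,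
      M.evalFrom M.start
          ((List.range j).flatMap (fun t => u t ++ wpow (v t) (i t)) ++ u j) =
        M.evalFrom M.start
          ((List.range j).flatMap (fun t => u t ++ wpow (v t) (i t)) ++ u j ++ v j))
    (hpre : ∀ j < k, v j ≠ [] →
      ¬ (v j <+: (List.range' (j + 1) (k - (j + 1))).flatMap
            (fun t => u t ++ wpow (v t) (i t)))) :
    ∀ a b, a < b → b < k → v a ≠ [] → v b ≠ [] →
      (v a).length ≠ (v b).length :=
  stmt9_general M w hw k u v i hexp hfact hloop hpre
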